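/- With r_opt(μ) = (1 + W(μ(μ+2)e^{-1}))/(2μ + 2), where W is the principal Lambert W-function, the function μ ↦ r_opt(μ) is strictly decreasing on (0, ∞) and r_opt(μ) → 1/2 as μ → 0⁺. -/

import Mathlib

/-!
Put `w = W (μ (μ + 2) / e)`. Then `w e^(w+1) = μ (μ + 2) = (μ + 1)² - 1`, so
`r_opt(μ)² = (1 + w)² / (4 (1 + w e^(w+1)))`. Since `w` increases with `μ`, it suffices that
`w ↦ (1 + w e^(w+1)) / (1 + w)²` increases on `[0, ∞)`: its derivative is
`((1 + w²) e^(w+1) - 2) / (1 + w)³ > 0` because `e^(w+1) ≥ e > 2`.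
The limit follows from `0 ≤ W x ≤ x`.
-/

open Real Set Filter Topology

noncomputable def ropt (W : ℝ → ℝ) (μ : ℝ) : ℝ :=
  (1 + W (μ * (μ + 2) * exp (-1))) / (2 * μ + 2)

lemma hasDerivAt_one_add_mul_exp_div_sq {x : ℝ} (hx : 1 + x ≠ 0) :
    HasDerivAt (fun w : ℝ => (1 + w * exp (w + 1)) / (1 + w) ^ 2)
      (((1 + x ^ 2) * exp (x + 1) - 2) / (1 + x) ^ 3) x := by
  have hexp : HasDerivAt (fun w : ℝ => exp (w + 1)) (exp (x + 1)) x := by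
    simpa using ((hasDerivAt_id x).add_const 1).exp
  have hnum := ((hasDerivAt_id' x).fun_mul hexp).const_add 1
  have hden := ((hasDerivAt_id' x).const_add 1).fun_pow 2
  refine (hnum.fun_div hden (pow_ne_zero 2 hx)).congr_deriv ?_
  field_simp
  ring

lemma strictMonoOn_one_add_mul_exp_div_sq :
    StrictMonoOn (fun w : ℝ => (1 + w * exp (w + 1)) / (1 + w) ^ 2) (Ici 0) := by
  refine strictMonoOn_of_deriv_pos (convex_Ici 0) ?_ fun x hx => ?_
  · refine ContinuousOn.div (by fun_prop) (by fun_prop) fun x hx => ?_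
    have : (0 : ℝ) ≤ x := hx
    positivity
  · rw [interior_Ici, mem_Ioi] at hx
    rw [(hasDerivAt_one_add_mul_exp_div_sq (by linarith)).deriv]
    have hexp : x + 2 ≤ exp (x + 1) := by linarith [add_one_le_exp (x + 1)]
    have : 2 < (1 + x ^ 2) * exp (x + 1) := by nlinarith [sq_nonneg x]
    exact div_pos (by linarith) (by positivity)

section LambertW

variable {W : ℝ → ℝ}

lemma strictMonoOn_of_mul_exp (hW : ∀ x : ℝ, 0 ≤ x → 0 ≤ W x ∧ W x * exp (W x) = x) :
    StrictMonoOn W (Ici 0) := by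
  intro x hx y hy hxy
  by_contra! hle
  obtain ⟨hx0, hxe⟩ := hW x hx
  have hye := (hW y hy).2
  have : W y * exp (W y) ≤ W x * exp (W x) :=
    mul_le_mul hle (exp_le_exp.mpr hle) (exp_pos _).le hx0
  linarith

lemma le_self_of_mul_exp (hW : ∀ x : ℝ, 0 ≤ x → 0 ≤ W x ∧ W x * exp (W x) = x)
    {x : ℝ} (hx : 0 ≤ x) : W x ≤ x := by
  obtain ⟨h0, he⟩ := hW x hx
  nlinarith [add_one_le_exp (W x)]

lemma tendsto_nhdsGE_zero_of_mul_exp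
    (hW : ∀ x : ℝ, 0 ≤ x → 0 ≤ W x ∧ W x * exp (W x) = x) :
    Tendsto W (𝓝[≥] 0) (𝓝 0) := by
  refine squeeze_zero' ?_ ?_ (tendsto_nhdsWithin_of_tendsto_nhds tendsto_id)
  · filter_upwards [self_mem_nhdsWithin] with x hx using (hW x hx).1
  · filter_upwards [self_mem_nhdsWithin] with x hx using le_self_of_mul_exp hW hx

lemma mul_exp_add_one_of_mul_exp (hW : ∀ x : ℝ, 0 ≤ x → 0 ≤ W x ∧ W x * exp (W x) = x)
    {y : ℝ} (hy : 0 ≤ y) : W (y * exp (-1)) * exp (W (y * exp (-1)) + 1) = y := by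
  rw [exp_add, ← mul_assoc, (hW _ (by positivity)).2, mul_assoc, ← exp_add, neg_add_cancel,
    exp_zero, mul_one]

lemma ropt_nonneg (hW : ∀ x : ℝ, 0 ≤ x → 0 ≤ W x ∧ W x * exp (W x) = x)
    {μ : ℝ} (hμ : 0 ≤ μ) : 0 ≤ ropt W μ :=
  have := (hW (μ * (μ + 2) * exp (-1)) (by positivity)).1
  div_nonneg (by positivity) (by positivity)

lemma ropt_sq (hW : ∀ x : ℝ, 0 ≤ x → 0 ≤ W x ∧ W x * exp (W x) = x)
    {μ : ℝ} (hμ : 0 ≤ μ) :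
    ropt W μ ^ 2 = 1 / (4 * ((1 + W (μ * (μ + 2) * exp (-1)) *
      exp (W (μ * (μ + 2) * exp (-1)) + 1)) / (1 + W (μ * (μ + 2) * exp (-1))) ^ 2)) := by
  have hw := (hW (μ * (μ + 2) * exp (-1)) (by positivity)).1
  rw [mul_exp_add_one_of_mul_exp hW (by positivity), ropt]
  field_simp
  ring

lemma strictAntiOn_ropt (hW : ∀ x : ℝ, 0 ≤ x → 0 ≤ W x ∧ W x * exp (W x) = x) :
    StrictAntiOn (ropt W) (Ioi 0) := by
  intro a (ha : 0 < a) b (hb : 0 < b) hab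
  have harg_nonneg : ∀ μ : ℝ, 0 < μ → 0 ≤ μ * (μ + 2) * exp (-1) := fun μ hμ => by positivity
  have hW_lt := strictMonoOn_of_mul_exp hW (harg_nonneg a ha) (harg_nonneg b hb) (by gcongr)
  have hwa := (hW _ (harg_nonneg a ha)).1
  have hratio_lt := strictMonoOn_one_add_mul_exp_div_sq hwa (hW _ (harg_nonneg b hb)).1 hW_lt
  rw [← pow_lt_pow_iff_left₀ (ropt_nonneg hW hb.le) (ropt_nonneg hW ha.le) two_ne_zero,
    ropt_sq hW hb.le, ropt_sq hW ha.le]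
  gcongr

lemma tendsto_ropt_nhdsGT_zero (hW : ∀ x : ℝ, 0 ≤ x → 0 ≤ W x ∧ W x * exp (W x) = x) :
    Tendsto (ropt W) (𝓝[>] 0) (𝓝 (1 / 2)) := by
  have harg : Tendsto (fun μ : ℝ => μ * (μ + 2) * exp (-1)) (𝓝[>] 0) (𝓝[≥] 0) :=
    tendsto_nhdsWithin_of_tendsto_nhds_of_eventually_within _
      ((Continuous.tendsto' (by fun_prop) 0 0 (by simp)).mono_left nhdsWithin_le_nhds)
      (eventually_nhdsWithin_of_forall fun μ (hμ : 0 < μ) => mem_Ici.mpr (by positivity))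
  have hden : Tendsto (fun μ : ℝ => 2 * μ + 2) (𝓝[>] 0) (𝓝 2) :=
    (Continuous.tendsto' (by fun_prop) 0 2 (by simp)).mono_left nhdsWithin_le_nhds
  rw [show (1 / 2 : ℝ) = (1 + 0) / 2 by norm_num]
  exact (((tendsto_nhdsGE_zero_of_mul_exp hW).comp harg).const_add 1).div hden two_ne_zero

end LambertW

theorem ropt_antitone_and_limit (W : ℝ → ℝ)
    (hW : ∀ x : ℝ, 0 ≤ x → 0 ≤ W x ∧ W x * Real.exp (W x) = x) :
    StrictAntiOn (fun μ : ℝ => (1 + W (μ * (μ + 2) * Real.exp (-1))) / (2 * μ + 2))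
      (Set.Ioi 0) ∧
    Filter.Tendsto (fun μ : ℝ => (1 + W (μ * (μ + 2) * Real.exp (-1))) / (2 * μ + 2))
      (nhdsWithin 0 (Set.Ioi 0)) (nhds (1 / 2)) :=
  ⟨strictAntiOn_ropt hW, tendsto_ropt_nhdsGT_zero hW⟩
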